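/- Let S be a finite set of events and lo a relation on S that relates (in one order or the other) every pair of distinct non-commuting events of S. Then any two sequences π₁ and π₂ that each enumerate S and extend lo satisfy π₁(σ) = π₂(σ) for every state σ. -/

import Mathlib

/-- Applying a finite sequence of events to a state via `act`. -/
def applySeq {St E : Type} (act : E → St → St) (π : List E) (σ : St) : St :=
  π.foldl (fun s e => act e s) σ

/-- Events `e, e'` commute under `act`. -/
def Commutes {St E : Type} (act : E → St → St) (e e' : E) : Prop :=
  ∀ σ, act e (act e' σ) = act e' (act e σ)

/-- `e` occurs strictly before `e'` in the list `π`. -/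
def precedes {E : Type} (π : List E) (e e' : E) : Prop :=
  ∃ i j : ℕ, i < j ∧ π[i]? = some e ∧ π[j]? = some e'

/-- `π` enumerates the finite set `S`: it lists each element of `S` exactly once. -/
def Enumerates {E : Type} (π : List E) (S : Finset E) : Prop :=
  π.Nodup ∧ ∀ e, e ∈ π ↔ e ∈ S

/-- `π` extends the relation `lo`. -/
def Extends {E : Type} (π : List E) (lo : E → E → Prop) : Prop :=
  ∀ e e', lo e e' → e ∈ π → e' ∈ π → precedes π e e'

lemma applySeq_cons {St E : Type} (act : E → St → St) (e : E) (l : List E) (σ : St) :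
    applySeq act (e :: l) σ = applySeq act l (act e σ) := rfl

lemma swap_lemma {St E : Type} (act : E → St → St) (e : E) :
    ∀ (A : List E) (B : List E) (σ : St), (∀ a ∈ A, Commutes act e a) →
    applySeq act (A ++ e :: B) σ = applySeq act (e :: (A ++ B)) σ := by
  intro A
  induction A with
  | nil => intro B σ _; rfl
  | cons x A' ih =>
      intro B σ hc
      have hx : Commutes act e x := hc x (by simp)
      calc applySeq act ((x :: A') ++ e :: B) σ
          = applySeq act (A' ++ e :: B) (act x σ) := rfl
        _ = applySeq act (e :: (A' ++ B)) (act x σ) := ih B _ (fun a ha => hc a (by simp [ha]))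
        _ = applySeq act (A' ++ B) (act e (act x σ)) := rfl
        _ = applySeq act (A' ++ B) (act x (act e σ)) := by rw [hx]
        _ = applySeq act ((x :: A') ++ B) (act e σ) := rfl
        _ = applySeq act (e :: ((x :: A') ++ B)) σ := rfl

lemma precedes_erase {E : Type} [DecidableEq E] {l : List E} {x y e : E}
    (hnd : l.Nodup) (hx : x ≠ e) (hy : y ≠ e) (h : precedes l x y) :
    precedes (l.erase e) x y := by
  by_cases he : e ∈ l
  · obtain ⟨A, B, heA, rfl, herase⟩ := List.exists_erase_eq he
    rw [herase]
    obtain ⟨i, j, hij, hi, hj⟩ := h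
    -- index function
    have key : ∀ k (z : E), z ≠ e → (A ++ e :: B)[k]? = some z →
        (if k < A.length then (A ++ B)[k]? else (A ++ B)[k-1]?) = some z ∧ k ≠ A.length := by
      intro k z hz hk
      by_cases hkA : k < A.length
      · simp only [if_pos hkA]
        rw [List.getElem?_append] at hk ⊢
        simp [hkA] at hk ⊢
        exact ⟨hk, by omega⟩
      · have hkA' : A.length ≤ k := le_of_not_gt hkA
        rw [List.getElem?_append_right hkA'] at hk
        have hkne : k ≠ A.length := by
          intro hEq
          rw [hEq] at hk
          simp at hk
          exact hz hk.symm
        have hklt : A.length < k := lt_of_le_of_ne hkA' (Ne.symm hkne)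
        have : k - A.length = (k - A.length - 1) + 1 := by omega
        rw [this] at hk
        simp only [List.getElem?_cons_succ] at hk
        simp only [if_neg hkA]
        constructor
        · rw [List.getElem?_append_right (by omega : A.length ≤ k - 1)]
          have : k - 1 - A.length = k - A.length - 1 := by omega
          rw [this]; exact hk
        · exact hkne
    obtain ⟨hi', hine⟩ := key i x hx hi
    obtain ⟨hj', hjne⟩ := key j y hy hj
    by_cases hiA : i < A.length
    · by_cases hjA : j < A.length
      · exact ⟨i, j, hij, by simpa [hiA] using hi', by simpa [hjA] using hj'⟩
      · exact ⟨i, j - 1, by omega, by simpa [hiA] using hi', by simpa [hjA] using hj'⟩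
    · have hjA : ¬ j < A.length := by omega
      exact ⟨i - 1, j - 1, by omega, by simpa [hiA] using hi', by simpa [hjA] using hj'⟩
  · rwa [List.erase_of_not_mem he]

lemma index_unique {E : Type} {l : List E} {x : E} {i j : ℕ}
    (hnd : l.Nodup) (hi : l[i]? = some x) (hj : l[j]? = some x) : i = j := by
  apply (List.getElem?_inj (l := l) _ hnd).mp (hi.trans hj.symm)
  exact (List.getElem?_eq_some_iff.mp hi).1

/-- if `lo` relates (in one order or the other) every pair of distinct
non-commuting events of a finite set `S`, then any two enumerations of `S`
extending `lo` produce the same state. -/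
theorem enumerations_agree {St E : Type} [DecidableEq E] (act : E → St → St)
    (S : Finset E) (lo : E → E → Prop)
    (htot : ∀ e ∈ S, ∀ e' ∈ S, e ≠ e' → ¬ Commutes act e e' → lo e e' ∨ lo e' e)
    (π1 π2 : List E)
    (h1 : Enumerates π1 S) (h1e : Extends π1 lo)
    (h2 : Enumerates π2 S) (h2e : Extends π2 lo)
    (σ : St) :
    applySeq act π1 σ = applySeq act π2 σ := by
  induction π1 generalizing S π2 σ with
  | nil =>
      have : π2 = [] := by
        rw [List.eq_nil_iff_forall_not_mem]
        intro a ha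
        have := (h2.2 a).mp ha
        have := (h1.2 a).mpr this
        simp at this
      rw [this]
  | cons e rest ih =>
      obtain ⟨hnd1, hmem1⟩ := h1
      obtain ⟨hnd2, hmem2⟩ := h2
      have heS : e ∈ S := (hmem1 e).mp (by simp)
      have heπ2 : e ∈ π2 := (hmem2 e).mpr heS
      obtain ⟨A, B, heA, hsplit, herase⟩ := List.exists_erase_eq heπ2
      have henr : e ∉ rest := (List.nodup_cons.mp hnd1).1
      -- e commutes with every element of A
      have hcomm : ∀ a ∈ A, Commutes act e a := by
        intro a ha
        by_contra hnc
        have haπ2 : a ∈ π2 := by rw [hsplit]; simp [ha]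
        have haS : a ∈ S := (hmem2 a).mp haπ2
        have hane : e ≠ a := fun h => heA (h ▸ ha)
        rcases htot e heS a haS hane hnc with hlo | hlo
        · -- e before a in π2, but a ∈ A before e: contradiction
          obtain ⟨i, j, hij, hi, hj⟩ := h2e e a hlo heπ2 haπ2
          -- index of e in π2 is A.length
          have hie : π2[A.length]? = some e := by
            rw [hsplit, List.getElem?_append_right le_rfl]; simp
          have hieq : i = A.length := index_unique hnd2 hi hie
          -- index of a is < A.length
          obtain ⟨k, hk⟩ := List.mem_iff_getElem?.mp ha
          have hkA : k < A.length := (List.getElem?_eq_some_iff.mp hk).1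
          have hk2 : π2[k]? = some a := by
            rw [hsplit, List.getElem?_append]; simpa [hkA] using hk
          have : j = k := index_unique hnd2 hj hk2
          omega
        · -- a before e in π1, but e is head: contradiction
          have haπ1 : a ∈ (e :: rest) := (hmem1 a).mpr haS
          obtain ⟨i, j, hij, hi, hj⟩ := h1e a e hlo haπ1 (by simp)
          have h0 : (e :: rest)[0]? = some e := by simp
          have : j = 0 := index_unique hnd1 hj h0
          omega
      -- rewrite π2
      have hswap : applySeq act π2 σ = applySeq act (e :: (A ++ B)) σ := by
        rw [hsplit]; exact swap_lemma act e A B σ hcomm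
      rw [hswap, applySeq_cons, applySeq_cons]
      -- apply IH with S.erase e
      have hnrest : rest.Nodup := (List.nodup_cons.mp hnd1).2
      have hndAB : (A ++ B).Nodup := by
        have := herase ▸ hnd2.erase e
        exact this
      have hmemAB : ∀ x, x ∈ A ++ B ↔ x ∈ S.erase e := by
        intro x
        rw [← herase, hnd2.mem_erase_iff, Finset.mem_erase, hmem2]
      have hmemrest : ∀ x, x ∈ rest ↔ x ∈ S.erase e := by
        intro x
        rw [Finset.mem_erase, ← hmem1]
        constructor
        · intro hx; exact ⟨fun h => henr (h ▸ hx), by simp [hx]⟩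
        · rintro ⟨hne, hx⟩; rcases List.mem_cons.mp hx with h | h
          · exact absurd h hne
          · exact h
      have hrest_eq : rest = (e :: rest).erase e := by simp
      apply ih (S.erase e)
        (fun x hx y hy => htot x (Finset.mem_of_mem_erase hx) y (Finset.mem_of_mem_erase hy))
        (A ++ B) ⟨hnrest, hmemrest⟩
      · intro x y hlo hx hy
        have hxne : x ≠ e := fun h => henr (h ▸ hx)
        have hyne : y ≠ e := fun h => henr (h ▸ hy)
        rw [hrest_eq]
        exact precedes_erase hnd1 hxne hyne
          (h1e x y hlo (by simp [hx]) (by simp [hy]))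
      · exact ⟨hndAB, hmemAB⟩
      · intro x y hlo hx hy
        have hxne : x ≠ e := (Finset.mem_erase.mp ((hmemAB x).mp hx)).1
        have hyne : y ≠ e := (Finset.mem_erase.mp ((hmemAB y).mp hy)).1
        rw [← herase]
        exact precedes_erase hnd2 hxne hyne
          (h2e x y hlo ((hmem2 x).mpr (Finset.mem_of_mem_erase ((hmemAB x).mp hx)))
            ((hmem2 y).mpr (Finset.mem_of_mem_erase ((hmemAB y).mp hy))))
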